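/- arXiv:2301.01571 — 9 statements merged into one kernel-verified Lean document; each statement's English description precedes it below -/
import Mathlib

section
/- Let ℓ ≥ 0 and r ≥ 1 be integers and let s_1, …, s_r be nonnegative integers. Then the number of occurrences of the word 0·1^ℓ as a subword of the word 0^{s_r} 1 0^{s_{r-1}} 1 ⋯ 0^{s_2} 1 0^{s_1} 1^ℓ equals Σ_{j=1}^{r} s_j · C(ℓ+j−1, j−1), where C(·,·) denotes the usual binomial coefficient. -/
/-!
Splitting the occurrences of `a·u` in `b·w` according to whether they use the first letter gives
the Pascal-type recurrence `binom(b·w, a·u) = binom(w, a·u) + [a = b] binom(w, u)`. Hence `1^ℓ`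
occurs `C(|w|₁, ℓ)` times in `w`, and each `0` of the block `0^{s_j}` starts exactly
`C(ℓ + j - 1, ℓ) = C(ℓ + j - 1, j - 1)` occurrences of `0·1^ℓ`, one for each choice of `ℓ` of the
`ℓ + j - 1` ones to its right.
-/

/-- The word `0^{s_r} 1 0^{s_{r-1}} 1 ⋯ 0^{s_2} 1 0^{s_1} 1^ℓ` over `{0,1}`,
where `0` is `false` and `1` is `true`. -/
def zeroBlockWord (s : ℕ → ℕ) (ℓ : ℕ) : ℕ → List Bool
  | 0 => List.replicate ℓ true
  | 1 => List.replicate (s 1) false ++ List.replicate ℓ true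
  | (r + 2) => List.replicate (s (r + 2)) false ++ true :: zeroBlockWord s ℓ (r + 1)

open Finset

namespace List

variable {α : Type*} [DecidableEq α]

theorem count_nil_sublists' (w : List α) : w.sublists'.count [] = 1 := by
  induction w with
  | nil => rfl
  | cons b w ih => simp [sublists'_cons, count_append, ih, count_eq_zero]

theorem count_map_cons (a b : α) (u : List α) (L : List (List α)) :
    (L.map (cons b)).count (a :: u) = if b = a then L.count u else 0 := by
  split_ifs with hba
  · subst hba
    exact count_map_of_injective _ _ cons_injective _
  · refine count_eq_zero.2 fun h => ?_
    obtain ⟨v, -, hv⟩ := mem_map.1 h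
    exact hba (cons_eq_cons.1 hv).1

theorem count_cons_sublists'_cons (a b : α) (u w : List α) :
    (b :: w).sublists'.count (a :: u) =
      w.sublists'.count (a :: u) + if b = a then w.sublists'.count u else 0 := by
  rw [sublists'_cons, count_append, count_map_cons]

theorem count_cons_sublists'_of_not_mem {a : α} {w : List α} (ha : a ∉ w) (u : List α) :
    w.sublists'.count (a :: u) = 0 :=
  count_eq_zero.2 fun h => ha ((mem_sublists'.1 h).subset mem_cons_self)

theorem count_replicate_sublists' (a : α) (w : List α) (n : ℕ) :
    w.sublists'.count (replicate n a) = (w.count a).choose n := by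
  induction w generalizing n with
  | nil => cases n <;> rfl
  | cons b w ih =>
    cases n with
    | zero => rw [replicate_zero, count_nil_sublists', Nat.choose_zero_right]
    | succ n =>
      rw [replicate_succ, count_cons_sublists'_cons, ← replicate_succ, ih, ih]
      by_cases hba : b = a
      · simp [hba, Nat.choose_succ_succ', add_comm]
      · simp [hba]

theorem count_cons_replicate_sublists'_replicate_append {a b : α} (hab : a ≠ b)
    (ℓ n : ℕ) (w : List α) :
    (replicate n a ++ w).sublists'.count (a :: replicate ℓ b) =
      n * (w.count b).choose ℓ + w.sublists'.count (a :: replicate ℓ b) := by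
  induction n with
  | zero => simp
  | succ n ih =>
    rw [replicate_succ, cons_append, count_cons_sublists'_cons, if_pos rfl, ih,
      count_replicate_sublists', count_append, count_replicate, if_neg (by simpa using hab),
      zero_add]
    ring

end List

open List

theorem count_true_zeroBlockWord_succ (s : ℕ → ℕ) (ℓ r : ℕ) :
    (zeroBlockWord s ℓ (r + 1)).count true = ℓ + r := by
  induction r with
  | zero => simp [zeroBlockWord, count_replicate]
  | succ r ih =>
    rw [zeroBlockWord, count_append, count_cons_self, ih, count_replicate, if_neg (by decide)]
    omega

theorem count_sublists'_zeroBlockWord (s : ℕ → ℕ) (ℓ : ℕ) :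
    ∀ r, (zeroBlockWord s ℓ r).sublists'.count (false :: replicate ℓ true) =
      ∑ j ∈ Icc 1 r, s j * (ℓ + j - 1).choose (j - 1)
  | 0 => by
    rw [zeroBlockWord, count_cons_sublists'_of_not_mem (by simp)]
    rfl
  | 1 => by
    rw [zeroBlockWord, count_cons_replicate_sublists'_replicate_append Bool.false_ne_true,
      count_cons_sublists'_of_not_mem (by simp)]
    simp
  | r + 2 => by
    have hchoose : (ℓ + r + 1).choose ℓ = (ℓ + (r + 2) - 1).choose (r + 2 - 1) := by
      rw [show ℓ + (r + 2) - 1 = ℓ + (r + 1) by omega, show r + 2 - 1 = r + 1 by omega,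
        ← Nat.choose_symm_add]
      rfl
    rw [zeroBlockWord, count_cons_replicate_sublists'_replicate_append Bool.false_ne_true,
      count_cons_sublists'_cons, if_neg (by decide), count_cons_self,
      count_true_zeroBlockWord_succ, count_sublists'_zeroBlockWord s ℓ (r + 1),
      sum_Icc_succ_top (by omega : 1 ≤ r + 2), hchoose]
    ring

theorem count_subword_zeroBlockWord_general (ℓ r : ℕ) (s : ℕ → ℕ) :
    ((zeroBlockWord s ℓ r).sublists).count (false :: List.replicate ℓ true) =
      ∑ j ∈ Finset.Icc 1 r, s j * Nat.choose (ℓ + j - 1) (j - 1) := by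
  rw [(sublists_perm_sublists' _).count_eq, count_sublists'_zeroBlockWord]

/-- The number of occurrences of `0·1^ℓ` as a subword of
`0^{s_r} 1 0^{s_{r-1}} 1 ⋯ 0^{s_2} 1 0^{s_1} 1^ℓ` equals
`∑_{j=1}^{r} s_j · C(ℓ+j−1, j−1)`. -/
theorem count_subword_zeroBlockWord (ℓ r : ℕ) (hr : 1 ≤ r) (s : ℕ → ℕ) :
    ((zeroBlockWord s ℓ r).sublists).count (false :: List.replicate ℓ true) =
      ∑ j ∈ Finset.Icc 1 r, s j * Nat.choose (ℓ + j - 1) (j - 1) :=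
  count_subword_zeroBlockWord_general ℓ r s
end

section
/- Let ℓ ≥ 0, r ≥ 1 and t be integers with 1 ≤ t ≤ r, and let s_1, …, s_t be nonnegative integers such that r · s_j ≤ ℓ for every j (equivalently s_j < (ℓ+1)/r). Then Σ_{j=1}^{t} s_j · C(ℓ+j−1, j−1) < C(ℓ+t, t), where C(·,·) denotes the usual binomial coefficient. -/
lemma hockey_aux (ℓ t : ℕ) (ht : 1 ≤ t) :
    ∑ j ∈ Finset.Icc 1 t, Nat.choose (ℓ + j - 1) (j - 1) =
      Nat.choose (ℓ + t) (t - 1) := by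
  induction t with
  | zero => omega
  | succ t ih =>
    rcases Nat.eq_or_lt_of_le ht with h | h
    · simp [← h]
    · have ht' : 1 ≤ t := by omega
      rw [Finset.sum_Icc_succ_top (by omega : 1 ≤ t + 1), ih ht']
      have : ℓ + (t + 1) - 1 = ℓ + t := by omega
      rw [this]
      have : t + 1 - 1 = t := rfl
      rw [this]
      have h2 : ℓ + (t + 1) = (ℓ + t) + 1 := by omega
      rw [h2]
      obtain ⟨k, hk⟩ : ∃ k, t = k + 1 := ⟨t - 1, by omega⟩
      subst hk
      simp [Nat.choose_succ_succ]

/-- If `1 ≤ t ≤ r` and `r · s_j ≤ ℓ` for every `j ∈ {1,…,t}`, then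
`∑_{j=1}^{t} s_j · C(ℓ+j−1, j−1) < C(ℓ+t, t)`. -/
theorem sum_lt_choose (ℓ r t : ℕ) (hr : 1 ≤ r) (ht1 : 1 ≤ t) (htr : t ≤ r)
    (s : ℕ → ℕ) (hs : ∀ j ∈ Finset.Icc 1 t, r * s j ≤ ℓ) :
    ∑ j ∈ Finset.Icc 1 t, s j * Nat.choose (ℓ + j - 1) (j - 1) <
      Nat.choose (ℓ + t) t := by
  have key : t * ∑ j ∈ Finset.Icc 1 t, s j * Nat.choose (ℓ + j - 1) (j - 1)
      ≤ ℓ * Nat.choose (ℓ + t) (t - 1) := by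
    rw [← hockey_aux ℓ t ht1, Finset.mul_sum, Finset.mul_sum]
    apply Finset.sum_le_sum
    intro j hj
    have h1 : r * s j ≤ ℓ := hs j hj
    have h2 : t * s j ≤ ℓ := le_trans (Nat.mul_le_mul_right _ htr) h1
    calc t * (s j * Nat.choose (ℓ + j - 1) (j - 1))
        = (t * s j) * Nat.choose (ℓ + j - 1) (j - 1) := by ring
      _ ≤ ℓ * Nat.choose (ℓ + j - 1) (j - 1) := Nat.mul_le_mul_right _ h2
  have hpos : 0 < Nat.choose (ℓ + t) (t - 1) :=
    Nat.choose_pos (by omega)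
  have hid : Nat.choose (ℓ + t) t * t = Nat.choose (ℓ + t) (t - 1) * (ℓ + 1) := by
    obtain ⟨k, hk⟩ : ∃ k, t = k + 1 := ⟨t - 1, by omega⟩
    subst hk
    have := Nat.choose_succ_right_eq (ℓ + (k + 1)) k
    simpa [Nat.add_sub_cancel_left, show ℓ + (k + 1) - k = ℓ + 1 by omega] using this
  have : t * ∑ j ∈ Finset.Icc 1 t, s j * Nat.choose (ℓ + j - 1) (j - 1)
      < t * Nat.choose (ℓ + t) t := by
    calc t * ∑ j ∈ Finset.Icc 1 t, s j * Nat.choose (ℓ + j - 1) (j - 1)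
        ≤ ℓ * Nat.choose (ℓ + t) (t - 1) := key
      _ < (ℓ + 1) * Nat.choose (ℓ + t) (t - 1) :=
          (Nat.mul_lt_mul_right hpos).mpr (by omega)
      _ = t * Nat.choose (ℓ + t) t := by
          rw [Nat.mul_comm, ← hid, Nat.mul_comm]
  exact Nat.lt_of_mul_lt_mul_left this
end

section
/- Let r and ℓ be integers with 1 ≤ r ≤ ℓ+1, and let s_1, …, s_r be nonnegative integers such that r · s_j ≤ ℓ for every j (equivalently s_j < (ℓ+1)/r). Then for every t with 1 ≤ t ≤ r−1, one has s_{t+1} = ⌊ (Σ_{j=1}^{t+1} s_j · C(ℓ+j−1, j−1)) / C(ℓ+t, t) ⌋, where C(·,·) denotes the usual binomial coefficient and ⌊·⌋ is the integer floor of the quotient. -/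
lemma hockey_aux_s3 (ℓ : ℕ) : ∀ t : ℕ, ∑ i ∈ Finset.range (t + 1), Nat.choose (ℓ + i) i
    = Nat.choose (ℓ + t + 1) t := by
  intro t
  induction t with
  | zero => simp
  | succ t ih =>
    rw [Finset.sum_range_succ, ih, show ℓ + (t + 1) + 1 = (ℓ + t + 1) + 1 from by ring,
      Nat.choose_succ_succ' (ℓ + t + 1) t, show ℓ + (t + 1) = ℓ + t + 1 from by ring]

/-- If `1 ≤ r ≤ ℓ+1` and `r · s_j ≤ ℓ` for every `j ∈ {1,…,r}`, then for every
`t` with `1 ≤ t ≤ r−1`,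
`s_{t+1} = ⌊(∑_{j=1}^{t+1} s_j · C(ℓ+j−1, j−1)) / C(ℓ+t, t)⌋`
(natural-number division is the floor of the quotient). -/
theorem s_succ_eq_floor_div (r ℓ : ℕ) (hr1 : 1 ≤ r) (hrℓ : r ≤ ℓ + 1)
    (s : ℕ → ℕ) (hs : ∀ j ∈ Finset.Icc 1 r, r * s j ≤ ℓ) :
    ∀ t : ℕ, 1 ≤ t → t ≤ r - 1 →
      s (t + 1) =
        (∑ j ∈ Finset.Icc 1 (t + 1), s j * Nat.choose (ℓ + j - 1) (j - 1)) /
          Nat.choose (ℓ + t) t := by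
  intro t ht1 htr
  set C := Nat.choose (ℓ + t) t with hCdef
  have hCpos : 0 < C := Nat.choose_pos (by omega)
  set R := ∑ j ∈ Finset.Icc 1 t, s j * Nat.choose (ℓ + j - 1) (j - 1) with hRdef
  have hsplit : ∑ j ∈ Finset.Icc 1 (t + 1), s j * Nat.choose (ℓ + j - 1) (j - 1)
      = R + s (t + 1) * C := by
    rw [Finset.sum_Icc_succ_top (by omega : 1 ≤ t + 1)]
    congr 2 <;> omega
  -- S = ∑_{j=1}^t C(ℓ+j-1, j-1) = C(ℓ+t, t-1)
  set S := Nat.choose (ℓ + t) (t - 1) with hSdef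
  have hSsum : ∑ j ∈ Finset.Icc 1 t, Nat.choose (ℓ + j - 1) (j - 1) = S := by
    rw [show Finset.Icc 1 t = Finset.Ico 1 (t + 1) from (Finset.Ico_add_one_right_eq_Icc 1 t).symm,
      Finset.sum_Ico_eq_sum_range]
    have h := hockey_aux_s3 ℓ (t - 1)
    rw [show ℓ + (t - 1) + 1 = ℓ + t from by omega] at h
    rw [hSdef, ← h, show t + 1 - 1 = (t - 1) + 1 from by omega]
    apply Finset.sum_congr rfl
    intro i _
    congr 1 <;> omega
  have hSpos : 0 < S := Nat.choose_pos (by omega)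
  have hident : C * t = S * (ℓ + 1) := by
    have := Nat.choose_succ_right_eq (ℓ + t) (t - 1)
    rw [show t - 1 + 1 = t by omega, show ℓ + t - (t - 1) = ℓ + 1 by omega] at this
    exact this
  -- bound: r * R ≤ ℓ * S
  have hrR : r * R ≤ ℓ * S := by
    rw [hRdef, Finset.mul_sum, ← hSsum, Finset.mul_sum]
    apply Finset.sum_le_sum
    intro j hj
    rw [← Nat.mul_assoc]
    apply Nat.mul_le_mul_right
    apply hs
    simp only [Finset.mem_Icc] at hj ⊢
    omega
  have hRC : R < C := by
    have h1 : t * (r * R) < t * (t * C) := by nlinarith [hrR, hSpos, hident, ht1]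
    have h2 : r * R < t * C := Nat.lt_of_mul_lt_mul_left h1
    have h3 : r * R < r * C := lt_of_lt_of_le h2 (Nat.mul_le_mul_right C (by omega))
    exact Nat.lt_of_mul_lt_mul_left h3
  rw [hsplit, Nat.add_mul_div_right _ _ hCpos, Nat.div_eq_of_lt hRC]; omega
end

section
/- Let r and ℓ be integers with 1 ≤ r ≤ ℓ+1. Let s_1, …, s_r and s'_1, …, s'_r be nonnegative integers such that r · s_j ≤ ℓ and r · s'_j ≤ ℓ for all j (equivalently s_j, s'_j < (ℓ+1)/r). If the number of occurrences of 0·1^ℓ as a subword of 0^{s_r} 1 0^{s_{r-1}} 1 ⋯ 0^{s_2} 1 0^{s_1} 1^ℓ equals the number of occurrences of 0·1^ℓ as a subword of 0^{s'_r} 1 0^{s'_{r-1}} 1 ⋯ 0^{s'_2} 1 0^{s'_1} 1^ℓ, then s_j = s'_j for every j ∈ {1, …, r}. -/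
private lemma count_map_cons_ne {a : Bool} {u : List Bool} (L : List (List Bool))
    (h : ∀ t, u ≠ a :: t) : (L.map (a :: ·)).count u = 0 := by
  rw [List.count_eq_zero]
  intro hu
  obtain ⟨t, _, rfl⟩ := List.mem_map.mp hu
  exact h t rfl

private lemma count_map_cons (a : Bool) (t : List Bool) (L : List (List Bool)) :
    (L.map (a :: ·)).count (a :: t) = L.count t := by
  induction L with
  | nil => simp
  | cons x L ih => simp [List.count_cons, ih]

private lemma count_sublists_eq_sublists' (w : List Bool) (u : List Bool) :
    w.sublists.count u = w.sublists'.count u :=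
  (List.sublists_perm_sublists' w).countP_eq (· == u)

private lemma count_replicate_true (w : List Bool) :
    ∀ k, w.sublists'.count (List.replicate k true) = (w.count true).choose k := by
  induction w with
  | nil =>
      intro k
      cases k with
      | zero => simp
      | succ k => simp [List.replicate_succ]
  | cons a w ih =>
      intro k
      rw [List.sublists'_cons, List.count_append]
      cases a with
      | false =>
          rw [count_map_cons_ne]
          · simp [ih k, List.count_cons]
          · intro t ht
            cases k <;> simp [List.replicate_succ] at ht
      | true =>
          cases k with
          | zero =>
              rw [count_map_cons_ne]
              · simpa using ih 0
              · intro t ht; simp at ht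
          | succ k =>
              rw [List.replicate_succ, count_map_cons, ih k, ← List.replicate_succ,
                ih (k+1), List.count_cons]
              simp only [Nat.choose_succ_succ, Nat.succ_eq_add_one, beq_self_eq_true,
                if_true]
              omega

private lemma cnt_cons_true (ℓ : ℕ) (w : List Bool) :
    (true :: w).sublists'.count (false :: List.replicate ℓ true) =
      w.sublists'.count (false :: List.replicate ℓ true) := by
  rw [List.sublists'_cons, List.count_append,
    count_map_cons_ne _ (fun t ht => by simp at ht)]
  simp

private lemma cnt_cons_false (ℓ : ℕ) (w : List Bool) :
    (false :: w).sublists'.count (false :: List.replicate ℓ true) =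
      w.sublists'.count (false :: List.replicate ℓ true) + (w.count true).choose ℓ := by
  rw [List.sublists'_cons, List.count_append, count_map_cons, count_replicate_true]

private lemma cnt_replicate_true (ℓ : ℕ) :
    ∀ k, (List.replicate k true).sublists'.count (false :: List.replicate ℓ true) = 0 := by
  intro k
  induction k with
  | zero => simp
  | succ k ih => rw [List.replicate_succ, cnt_cons_true]; exact ih

private lemma cnt_replicate_false_append (ℓ : ℕ) (w : List Bool) :
    ∀ k, (List.replicate k false ++ w).sublists'.count (false :: List.replicate ℓ true) =
      w.sublists'.count (false :: List.replicate ℓ true) + k * (w.count true).choose ℓ := by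
  intro k
  induction k with
  | zero => simp
  | succ k ih =>
      rw [List.replicate_succ, List.cons_append, cnt_cons_false, ih]
      have h : (List.replicate k false ++ w).count true = w.count true := by
        simp [List.count_append, List.count_replicate]
      rw [h]; ring

private lemma count_true_zbw (s : ℕ → ℕ) (ℓ : ℕ) :
    ∀ r, (zeroBlockWord s ℓ (r+1)).count true = ℓ + r := by
  intro r
  induction r with
  | zero => simp [zeroBlockWord, List.count_append, List.count_replicate]
  | succ r ih =>
      rw [show zeroBlockWord s ℓ (r+1+1) =
        List.replicate (s (r+2)) false ++ true :: zeroBlockWord s ℓ (r+1) from rfl]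
      simp [List.count_append, List.count_replicate, List.count_cons, ih]
      omega

private lemma cnt_zbw (s : ℕ → ℕ) (ℓ : ℕ) : ∀ r,
    (zeroBlockWord s ℓ (r+1)).sublists'.count (false :: List.replicate ℓ true) =
      ∑ i ∈ Finset.range (r+1), s (i+1) * (ℓ + i).choose ℓ := by
  intro r
  induction r with
  | zero =>
      rw [show zeroBlockWord s ℓ 1 =
          List.replicate (s 1) false ++ List.replicate ℓ true from rfl,
        cnt_replicate_false_append, cnt_replicate_true]
      simp [List.count_replicate]
  | succ r ih =>
      rw [show zeroBlockWord s ℓ (r+1+1) =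
          List.replicate (s (r+2)) false ++ true :: zeroBlockWord s ℓ (r+1) from rfl,
        cnt_replicate_false_append, cnt_cons_true, ih]
      have h : (true :: zeroBlockWord s ℓ (r+1)).count true = ℓ + (r+1) := by
        simp [List.count_cons, count_true_zbw]
        omega
      rw [h]
      conv_rhs => rw [Finset.sum_range_succ]

private lemma hockey (ℓ : ℕ) :
    ∀ r, ∑ i ∈ Finset.range r, (ℓ + i).choose ℓ = (ℓ + r).choose (ℓ + 1) := by
  intro r
  induction r with
  | zero => simp [Nat.choose_succ_self]
  | succ r ih =>
      rw [Finset.sum_range_succ, ih, show ℓ + (r+1) = (ℓ + r) + 1 from rfl,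
        Nat.choose_succ_succ]
      simp only [Nat.succ_eq_add_one]
      omega

private lemma id1 (ℓ r : ℕ) : (ℓ + 1) * (ℓ + r).choose (ℓ + 1) = r * (ℓ + r).choose ℓ := by
  cases r with
  | zero => simp [Nat.choose_succ_self]
  | succ q =>
      have h1 := Nat.add_one_mul_choose_eq (ℓ + q) ℓ
      have h2 := Nat.add_one_mul_choose_eq (ℓ + q) q
      have h3 : (ℓ + q).choose q = (ℓ + q).choose ℓ := by
        have := Nat.choose_symm (show ℓ ≤ ℓ + q by omega)
        rwa [Nat.add_sub_cancel_left] at this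
      have h4 : (ℓ + q + 1).choose (q + 1) = (ℓ + q + 1).choose ℓ := by
        have := Nat.choose_symm (show ℓ ≤ ℓ + q + 1 by omega)
        rwa [show ℓ + q + 1 - ℓ = q + 1 by omega] at this
      rw [h3, h4] at h2
      calc (ℓ + 1) * (ℓ + q + 1).choose (ℓ + 1)
          = (ℓ + q + 1).choose (ℓ + 1) * (ℓ + 1) := by ring
        _ = (ℓ + q + 1) * (ℓ + q).choose ℓ := h1.symm
        _ = (ℓ + q + 1).choose ℓ * (q + 1) := h2
        _ = (q + 1) * (ℓ + (q + 1)).choose ℓ := by ring_nf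
      -- align `ℓ + q + 1` with `ℓ + (q + 1)`

private lemma top_le (ℓ R r : ℕ) (hrR : r + 1 ≤ R) (s s' : ℕ → ℕ)
    (hs' : ∀ i ∈ Finset.range (r+1), R * s' (i+1) ≤ ℓ)
    (heq : ∑ i ∈ Finset.range (r+1), s (i+1) * (ℓ + i).choose ℓ
         = ∑ i ∈ Finset.range (r+1), s' (i+1) * (ℓ + i).choose ℓ) :
    s (r+1) ≤ s' (r+1) := by
  by_contra h
  push_neg at h
  rw [Finset.sum_range_succ, Finset.sum_range_succ] at heq
  set a := (ℓ + r).choose ℓ with ha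
  have hX : s' (r+1) * a + a ≤ s (r+1) * a := by
    have := Nat.mul_le_mul_right a (Nat.succ_le_of_lt h)
    rwa [Nat.succ_mul] at this
  have hSL : (0:ℕ) ≤ ∑ i ∈ Finset.range r, s (i+1) * (ℓ + i).choose ℓ := Nat.zero_le _
  have hSa : a ≤ ∑ i ∈ Finset.range r, s' (i+1) * (ℓ + i).choose ℓ := by omega
  have hRS : R * (∑ i ∈ Finset.range r, s' (i+1) * (ℓ + i).choose ℓ)
      ≤ ℓ * (ℓ + r).choose (ℓ + 1) := by
    rw [Finset.mul_sum, ← hockey ℓ r, Finset.mul_sum]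
    apply Finset.sum_le_sum
    intro i hi
    rw [← mul_assoc]
    exact Nat.mul_le_mul_right _
      (hs' i (Finset.mem_range.mpr (lt_of_lt_of_le (Finset.mem_range.mp hi) (Nat.le_succ r))))
  have hapos : 0 < a := Nat.choose_pos (by omega)
  have key : (ℓ + 1) * (R * (∑ i ∈ Finset.range r, s' (i+1) * (ℓ + i).choose ℓ))
      ≤ ℓ * (r * a) := by
    calc (ℓ + 1) * (R * _) ≤ (ℓ + 1) * (ℓ * (ℓ + r).choose (ℓ + 1)) :=
          Nat.mul_le_mul_left _ hRS
      _ = ℓ * ((ℓ + 1) * (ℓ + r).choose (ℓ + 1)) := by ring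
      _ = ℓ * (r * a) := by rw [id1]
  have key2 : (ℓ + 1) * (R * a)
      ≤ (ℓ + 1) * (R * (∑ i ∈ Finset.range r, s' (i+1) * (ℓ + i).choose ℓ)) :=
    Nat.mul_le_mul_left _ (Nat.mul_le_mul_left _ hSa)
  have hlt : ℓ * (r * a) < (ℓ + 1) * (R * a) := by
    have h1 : ℓ * r < (ℓ + 1) * R := by nlinarith
    calc ℓ * (r * a) = (ℓ * r) * a := by ring
      _ < ((ℓ + 1) * R) * a := (Nat.mul_lt_mul_right hapos).mpr h1
      _ = (ℓ + 1) * (R * a) := by ring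
  omega

private lemma sums_inj (ℓ R : ℕ) (s s' : ℕ → ℕ) : ∀ r, r ≤ R →
    (∀ i ∈ Finset.range r, R * s (i+1) ≤ ℓ) →
    (∀ i ∈ Finset.range r, R * s' (i+1) ≤ ℓ) →
    (∑ i ∈ Finset.range r, s (i+1) * (ℓ + i).choose ℓ
      = ∑ i ∈ Finset.range r, s' (i+1) * (ℓ + i).choose ℓ) →
    ∀ i ∈ Finset.range r, s (i+1) = s' (i+1) := by
  intro r
  induction r with
  | zero => simp
  | succ r ih =>
      intro hrR hs hs' heq
      have htop : s (r+1) = s' (r+1) :=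
        le_antisymm (top_le ℓ R r hrR s s' hs' heq)
          (top_le ℓ R r hrR s' s hs heq.symm)
      rw [Finset.sum_range_succ, Finset.sum_range_succ, htop] at heq
      have heq' : ∑ i ∈ Finset.range r, s (i+1) * (ℓ + i).choose ℓ
          = ∑ i ∈ Finset.range r, s' (i+1) * (ℓ + i).choose ℓ := by omega
      intro i hi
      rw [Finset.mem_range] at hi
      rcases Nat.lt_succ_iff_lt_or_eq.mp hi with hlt | rfl
      · exact ih (by omega)
          (fun j hj => hs j (Finset.mem_range.mpr (Nat.lt_succ_of_lt (Finset.mem_range.mp hj))))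
          (fun j hj => hs' j (Finset.mem_range.mpr (Nat.lt_succ_of_lt (Finset.mem_range.mp hj))))
          heq' i (Finset.mem_range.mpr hlt)
      · exact htop

/-- If `1 ≤ r ≤ ℓ+1`, `r · s_j ≤ ℓ` and `r · s'_j ≤ ℓ` for all `j ∈ {1,…,r}`, and the
numbers of occurrences of `0·1^ℓ` as a subword of
`0^{s_r} 1 ⋯ 1 0^{s_1} 1^ℓ` and of `0^{s'_r} 1 ⋯ 1 0^{s'_1} 1^ℓ` agree, then
`s_j = s'_j` for every `j ∈ {1,…,r}`. -/
theorem subword_count_determines_blocks (r ℓ : ℕ) (hr1 : 1 ≤ r) (hrℓ : r ≤ ℓ + 1)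
    (s s' : ℕ → ℕ)
    (hs : ∀ j ∈ Finset.Icc 1 r, r * s j ≤ ℓ)
    (hs' : ∀ j ∈ Finset.Icc 1 r, r * s' j ≤ ℓ)
    (hcount :
      ((zeroBlockWord s ℓ r).sublists).count (false :: List.replicate ℓ true) =
        ((zeroBlockWord s' ℓ r).sublists).count (false :: List.replicate ℓ true)) :
    ∀ j ∈ Finset.Icc 1 r, s j = s' j := by
  obtain ⟨q, rfl⟩ : ∃ q, r = q + 1 := ⟨r - 1, by omega⟩
  rw [count_sublists_eq_sublists', count_sublists_eq_sublists',
    cnt_zbw, cnt_zbw] at hcount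
  intro j hj
  rw [Finset.mem_Icc] at hj
  obtain ⟨i, rfl⟩ : ∃ i, j = i + 1 := ⟨j - 1, by omega⟩
  exact sums_inj ℓ (q+1) s s' (q+1) le_rfl
    (fun i hi => hs (i+1) (Finset.mem_Icc.mpr ⟨by omega, by
      have := Finset.mem_range.mp hi; omega⟩))
    (fun i hi => hs' (i+1) (Finset.mem_Icc.mpr ⟨by omega, by
      have := Finset.mem_range.mp hi; omega⟩))
    hcount i (Finset.mem_range.mpr (by omega))
end

section
/- Let p and v be words over {0,1}, let r ≥ 1 be an integer, let s_1, …, s_r be nonnegative integers, let m = |v|_1 be the number of occurrences of the letter 1 in v, and let w = p · 0^{s_r} 1 0^{s_{r-1}} 1 ⋯ 1 0^{s_1} 1 · v. Then the number of occurrences of 0·1^{1+m} as a subword of w equals the number of occurrences of 0·1^{1+m} as a subword of p·1^{r+m} plus Σ_{j=1}^{r} s_j · C(j+m, 1+m), where C(·,·) denotes the usual binomial coefficient. -/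
/-- The word `0^{s_r} 1 0^{s_{r-1}} 1 ⋯ 1 0^{s_1} 1` over `{0,1}`,
where `0` is `false` and `1` is `true` (each zero-block is followed by a `1`). -/
def zeroBlocksOne (s : ℕ → ℕ) : ℕ → List Bool
  | 0 => []
  | (r + 1) => List.replicate (s (r + 1)) false ++ true :: zeroBlocksOne s r

namespace SubwordAux

/-- Number of occurrences of `u` as a subword of `w`, recursively. -/
def scc : List Bool → List Bool → ℕ
  | [], [] => 1
  | [], _ :: _ => 0
  | _ :: w, [] => scc w []
  | a :: w, b :: u => scc w (b :: u) + if b = a then scc w u else 0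

lemma scc_nil_pattern (w : List Bool) : scc w [] = 1 := by
  induction w with
  | nil => rfl
  | cons a w ih => simpa [scc] using ih

section Inst

attribute [local instance 2000] instBEqOfDecidableEq

lemma count_inst (u : List Bool) (l : List (List Bool)) :
    @List.count _ List.instBEq u l = l.count u := by
  induction l with
  | nil => rfl
  | cons a l ih =>
    rw [@List.count_cons _ List.instBEq, List.count_cons, ih]
    congr 1
    simp

lemma scc_eq_count' (w u : List Bool) :
    scc w u = (w.sublists).count u := by
  induction w generalizing u with
  | nil =>
    cases u with
    | nil => simp [scc, List.sublists_nil]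
    | cons b u => simp [scc, List.sublists_nil]
  | cons a w ih =>
    rw [(List.sublists_perm_sublists' (a :: w)).count_eq u, List.sublists'_cons,
      List.count_append]
    have hb : ∀ x : List Bool,
        (w.sublists').count x = (w.sublists).count x :=
      fun x => ((List.sublists_perm_sublists' w).count_eq x).symm
    cases u with
    | nil =>
      have h0 : (List.map (List.cons a) w.sublists').count ([] : List Bool) = 0 := by
        rw [List.count_eq_zero]
        simp
      rw [h0, hb]
      simpa [scc] using ih []
    | cons b u =>
      by_cases hba : b = a
      · subst hba
        have h1 : (List.map (List.cons b) w.sublists').count (b :: u)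
              = (w.sublists').count u :=
          List.count_map_of_injective _ (List.cons b) (fun x y h => by simpa using h) u
        rw [h1, hb, hb]
        simp [scc, ih]
      · have h1 : (List.map (List.cons a) w.sublists').count (b :: u) = 0 := by
          rw [List.count_eq_zero]
          intro hmem
          obtain ⟨x, -, hx⟩ := List.mem_map.1 hmem
          exact hba (by injection hx.symm)
        rw [h1, hb]
        simp [scc, hba, ih]

end Inst

lemma scc_eq_count (w u : List Bool) : scc w u = (w.sublists).count u := by
  rw [count_inst]
  exact scc_eq_count' w u

/-- occurrences of `1^k` -/
def g (w : List Bool) (k : ℕ) : ℕ := scc w (List.replicate k true)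

/-- occurrences of `0·1^k` -/
def f (w : List Bool) (k : ℕ) : ℕ := scc w (false :: List.replicate k true)

lemma g_zero (w : List Bool) : g w 0 = 1 := by
  simpa [g] using scc_nil_pattern w

lemma g_false_cons (w : List Bool) (k : ℕ) : g (false :: w) k = g w k := by
  cases k with
  | zero => simp [g, scc, List.replicate]
  | succ k => simp [g, scc, List.replicate_succ]

lemma g_true_cons (w : List Bool) (k : ℕ) : g (true :: w) (k + 1) = g w (k + 1) + g w k := by
  simp [g, scc, List.replicate_succ]

lemma g_eq_choose (w : List Bool) (k : ℕ) : g w k = Nat.choose (w.count true) k := by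
  induction w generalizing k with
  | nil =>
    cases k with
    | zero => simp [g_zero]
    | succ k => simp [g, scc, List.replicate_succ]
  | cons a w ih =>
    cases a with
    | false =>
      rw [g_false_cons, ih]
      simp [List.count_cons]
    | true =>
      cases k with
      | zero => simp [g_zero]
      | succ k =>
        rw [g_true_cons, ih, ih]
        simp [List.count_cons, Nat.choose_succ_succ, Nat.add_comm]

lemma f_true_cons (w : List Bool) (k : ℕ) : f (true :: w) k = f w k := by
  simp [f, scc]

lemma f_false_cons (w : List Bool) (k : ℕ) : f (false :: w) k = f w k + g w k := by
  simp [f, g, scc]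

lemma f_nil (k : ℕ) : f [] k = 0 := by simp [f, scc]

lemma f_replicate_true (n k : ℕ) : f (List.replicate n true) k = 0 := by
  induction n with
  | zero => simp [f_nil]
  | succ n ih => rw [List.replicate_succ, f_true_cons, ih]

lemma f_eq_zero_of_lt (w : List Bool) (k : ℕ) (h : w.count true < k) : f w k = 0 := by
  induction w generalizing k with
  | nil => simp [f_nil]
  | cons a w ih =>
    cases a with
    | true =>
      rw [f_true_cons]
      apply ih
      simp [List.count_cons] at h
      omega
    | false =>
      rw [f_false_cons, g_eq_choose]
      have hc : w.count true < k := by simpa [List.count_cons] using h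
      rw [ih _ hc, Nat.choose_eq_zero_of_lt hc]

lemma vandermonde (a b k : ℕ) :
    ∑ i ∈ Finset.range (k + 1), Nat.choose a i * Nat.choose b (k - i) =
      Nat.choose (a + b) k := by
  rw [Nat.add_choose_eq, Finset.Nat.sum_antidiagonal_eq_sum_range_succ_mk]

lemma f_append (x y : List Bool) (k : ℕ) :
    f (x ++ y) k = f y k +
      ∑ j ∈ Finset.range (k + 1), f x j * Nat.choose (y.count true) (k - j) := by
  induction x generalizing k with
  | nil => simp [f_nil]
  | cons a x ih =>
    cases a with
    | true =>
      rw [List.cons_append, f_true_cons, ih]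
      simp [f_true_cons]
    | false =>
      have hcnt : (x ++ y).count true = x.count true + y.count true := by
        simp [List.count_append]
      simp only [List.cons_append, f_false_cons, g_eq_choose, ih, hcnt]
      rw [← vandermonde (x.count true) (y.count true) k]
      simp only [Nat.add_mul, Finset.sum_add_distrib]
      ring
    
lemma f_replicate_false_append (n : ℕ) (y : List Bool) (k : ℕ) :
    f (List.replicate n false ++ y) k = f y k + n * Nat.choose (y.count true) k := by
  induction n with
  | zero => simp
  | succ n ih =>
    rw [List.replicate_succ, List.cons_append, f_false_cons, ih, g_eq_choose]
    have : (List.replicate n false ++ y).count true = y.count true := by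
      simp [List.count_append, List.count_replicate]
    rw [this]
    ring

lemma count_true_zeroBlocksOne (s : ℕ → ℕ) (r : ℕ) :
    (zeroBlocksOne s r).count true = r := by
  induction r with
  | zero => simp [zeroBlocksOne]
  | succ r ih =>
    simp [zeroBlocksOne, List.count_append, List.count_cons, List.count_replicate, ih]

lemma f_zeroBlocksOne (s : ℕ → ℕ) (r k : ℕ) :
    f (zeroBlocksOne s r) k = ∑ j ∈ Finset.Icc 1 r, s j * Nat.choose j k := by
  induction r with
  | zero => simp [zeroBlocksOne, f_nil]
  | succ r ih =>
    rw [Finset.sum_Icc_succ_top (by omega)]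
    show f (List.replicate (s (r + 1)) false ++ true :: zeroBlocksOne s r) k = _
    rw [f_replicate_false_append, f_true_cons, ih]
    have : (true :: zeroBlocksOne s r).count true = r + 1 := by
      simp [List.count_cons, count_true_zeroBlocksOne]
    rw [this]

end SubwordAux

open SubwordAux

/-- Let `m = |v|_1` and `w = p · 0^{s_r} 1 0^{s_{r-1}} 1 ⋯ 1 0^{s_1} 1 · v`. The number of
occurrences of `0·1^{1+m}` as a subword of `w` equals the number of occurrences of
`0·1^{1+m}` as a subword of `p·1^{r+m}` plus `∑_{j=1}^{r} s_j · C(j+m, 1+m)`. -/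
theorem count_subword_with_prefix (p v : List Bool) (r : ℕ) (hr : 1 ≤ r)
    (s : ℕ → ℕ) (m : ℕ) (hm : m = v.count true) :
    ((p ++ zeroBlocksOne s r ++ v).sublists).count
        (false :: List.replicate (1 + m) true) =
      ((p ++ List.replicate (r + m) true).sublists).count
          (false :: List.replicate (1 + m) true) +
        ∑ j ∈ Finset.Icc 1 r, s j * Nat.choose (j + m) (1 + m) := by
  rw [← scc_eq_count, ← scc_eq_count]
  show SubwordAux.f _ (1 + m) = SubwordAux.f _ (1 + m) + _
  have hcz : (zeroBlocksOne s r ++ v).count true = r + m := by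
    simp [List.count_append, count_true_zeroBlocksOne, hm]
  have hct : (List.replicate (r + m) true).count true = r + m := by
    simp [List.count_replicate]
  have key : SubwordAux.f (zeroBlocksOne s r ++ v) (1 + m) =
      ∑ j ∈ Finset.Icc 1 r, s j * Nat.choose (j + m) (1 + m) := by
    rw [f_append, f_eq_zero_of_lt v (1 + m) (by omega)]
    simp only [f_zeroBlocksOne]
    simp only [Finset.sum_mul, Nat.zero_add]
    rw [Finset.sum_comm]
    apply Finset.sum_congr rfl
    intro j _
    rw [← hm, ← vandermonde j m (1 + m), Finset.mul_sum]
    exact Finset.sum_congr rfl fun i _ => by ring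
  rw [List.append_assoc,
    f_append p (zeroBlocksOne s r ++ v) (1 + m),
    f_append p (List.replicate (r + m) true) (1 + m),
    hcz, hct, f_replicate_true, key]
  ring
end

section
/- Let p, v, v' be words over {0,1} with |v|_1 = |v'|_1 = m, and let r be an integer with 1 ≤ r ≤ m+2. Let s_1, …, s_r and s'_1, …, s'_r be nonnegative integers such that for every j ∈ {1, …, r}, either s_j = s'_j, or both r · s_j ≤ m+1 and r · s'_j ≤ m+1 (equivalently s_j, s'_j < (m+2)/r). Set w = p · 0^{s_r} 1 0^{s_{r-1}} 1 ⋯ 1 0^{s_1} 1 · v and w' = p · 0^{s'_r} 1 0^{s'_{r-1}} 1 ⋯ 1 0^{s'_1} 1 · v'. If the number of occurrences of 0·1^{1+m} as a subword of w equals the number of occurrences of 0·1^{1+m} as a subword of w', then s_j = s'_j for every j ∈ {1, …, r}. -/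
namespace SubwordAux

/-- Weighted count: `∑` over `false`s in `w` of `C(#trues after + n, m+1)`. -/
def wtA (m n : ℕ) : List Bool → ℕ
  | [] => 0
  | (b :: w) => (if b then 0 else (w.count true + n).choose (m+1)) + wtA m n w

lemma count_map_cons_self (a : Bool) (L : List (List Bool)) (t : List Bool) :
    (L.map (a :: ·)).count (a :: t) = L.count t := by
  induction L with
  | nil => rfl
  | cons x L ih => simp [List.count_cons, ih]

lemma count_map_cons_ne (a : Bool) (L : List (List Bool)) (u : List Bool)
    (h : ∀ t, u ≠ a :: t) : (L.map (a :: ·)).count u = 0 := by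
  induction L with
  | nil => rfl
  | cons x L ih => simp [List.count_cons, ih, (h x).symm]

lemma count_sublists_cons (a : Bool) (l : List Bool) (u : List Bool) :
    ((a :: l).sublists).count u =
      (l.sublists).count u + ((l.sublists).map (a :: ·)).count u := by
  have h := (List.sublists_cons_perm_append a l).countP_eq (· == u)
  rw [List.countP_append] at h
  exact h

lemma count_sublists_replicate (w : List Bool) (k : ℕ) :
    (w.sublists).count (List.replicate k true) = (w.count true).choose k := by
  induction w generalizing k with
  | nil =>
    cases k with
    | zero => simp
    | succ k => simp [List.replicate_succ]
  | cons a w ih =>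
    rw [count_sublists_cons]
    cases k with
    | zero =>
      rw [count_map_cons_ne _ _ _ (by simp)]
      have h0 := ih 0
      simp only [List.replicate_zero] at h0 ⊢
      rw [h0]
      simp
    | succ k =>
      cases a with
      | false =>
        rw [count_map_cons_ne _ _ _
          (fun t ht => by rw [List.replicate_succ] at ht; simp at ht), ih]
        simp [List.count_cons]
      | true =>
        rw [List.replicate_succ, count_map_cons_self, ← List.replicate_succ, ih, ih]
        simp [List.count_cons, Nat.choose_succ_succ, Nat.add_comm]

lemma cnt_append (m : ℕ) (x y : List Bool) :
    ((x ++ y).sublists).count (false :: List.replicate (m+1) true)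
      = wtA m (y.count true) x
        + ((y.sublists).count (false :: List.replicate (m+1) true)) := by
  induction x with
  | nil => simp [wtA]
  | cons a x ih =>
    rw [List.cons_append, count_sublists_cons, ih]
    cases a with
    | true =>
      rw [count_map_cons_ne _ _ _ (fun t ht => by simp at ht)]
      simp [wtA]
    | false =>
      rw [count_map_cons_self, count_sublists_replicate]
      simp [wtA, List.count_append]
      ring

lemma wtA_eq_zero (m n : ℕ) (w : List Bool) (h : w.count true + n ≤ m) :
    wtA m n w = 0 := by
  induction w with
  | nil => rfl
  | cons a w ih =>
    have hw : w.count true + n ≤ m := by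
      have hcc : w.count true ≤ (a :: w).count true := by
        cases a <;> simp [List.count_cons]
      omega
    cases a with
    | true => simpa [wtA] using ih hw
    | false =>
      have h0 : (w.count true + n).choose (m+1) = 0 := Nat.choose_eq_zero_of_lt (by omega)
      simp [wtA, ih hw, h0]

lemma cnt_eq_wtA (m : ℕ) (w : List Bool) :
    ((w.sublists).count (false :: List.replicate (m+1) true)) = wtA m 0 w := by
  have := cnt_append m w []
  simpa using this

lemma wtA_replicate_false_append (m n t : ℕ) (w : List Bool) :
    wtA m n (List.replicate t false ++ w)
      = t * (w.count true + n).choose (m+1) + wtA m n w := by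
  induction t with
  | zero => simp
  | succ t ih =>
    rw [List.replicate_succ, List.cons_append]
    simp [wtA, ih, List.count_append, List.count_replicate, Nat.succ_mul]
    ring

lemma hockey (m K : ℕ) :
    ∑ j ∈ Finset.Icc 1 K, (m + j).choose (m+1) = (m + K + 1).choose (m+2) := by
  induction K with
  | zero => simp [Nat.choose_eq_zero_of_lt]
  | succ K ih =>
    rw [Finset.sum_Icc_succ_top (by omega), ih,
      show m + (K+1) + 1 = (m + K + 1) + 1 by ring,
      Nat.choose_succ_succ (m + K + 1) (m+1),
      show m + (K + 1) = m + K + 1 by ring]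
    simp only [Nat.succ_eq_add_one]
    rw [show m + 1 + 1 = m + 2 by omega]
    omega

lemma wtA_zeroBlocks (m : ℕ) (s : ℕ → ℕ) (r : ℕ) :
    wtA m m (zeroBlocksOne s r)
      = ∑ j ∈ Finset.Icc 1 r, s j * (m + j).choose (m+1) := by
  induction r with
  | zero =>
    rw [Finset.Icc_eq_empty (by omega)]
    simp [zeroBlocksOne, wtA]
  | succ r ih =>
    simp only [zeroBlocksOne]
    rw [wtA_replicate_false_append]
    have hcnt : (true :: zeroBlocksOne s r).count true = r + 1 := by
      simp [List.count_cons, count_true_zeroBlocksOne]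
    have hwt : wtA m m (true :: zeroBlocksOne s r) = wtA m m (zeroBlocksOne s r) := by
      simp [wtA]
    rw [hcnt, hwt, ih, Finset.sum_Icc_succ_top (by omega),
      show r + 1 + m = m + (r + 1) by ring]
    exact Nat.add_comm _ _

lemma cnt_total (m r : ℕ) (p v : List Bool) (hv : v.count true = m) (s : ℕ → ℕ) :
    ((p ++ zeroBlocksOne s r ++ v).sublists).count (false :: List.replicate (1+m) true)
      = wtA m (r + m) p + ∑ j ∈ Finset.Icc 1 r, s j * (m + j).choose (m+1) := by
  rw [show 1 + m = m + 1 by omega, List.append_assoc, cnt_append, cnt_append]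
  have h1 : (zeroBlocksOne s r ++ v).count true = r + m := by
    rw [List.count_append, count_true_zeroBlocksOne, hv]
  have h2 : ((v.sublists).count (false :: List.replicate (m+1) true)) = 0 := by
    rw [cnt_eq_wtA]
    exact wtA_eq_zero _ _ _ (by omega)
  rw [h1, h2, hv, wtA_zeroBlocks]
  simp

/-- Key contradiction lemma: if `J` is the largest index where `s, s'` differ,
with `s' J < s J`, the weighted sums cannot be equal. -/
lemma key (m r J : ℕ) (s s' : ℕ → ℕ) (D : Finset ℕ)
    (hD : D ⊆ Finset.Icc 1 r) (hJ : J ∈ D) (hmax : ∀ j ∈ D, j ≤ J)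
    (hb : ∀ j ∈ D, r * s' j ≤ m + 1)
    (hlt : s' J < s J)
    (hsum : ∑ j ∈ D, s j * (m + j).choose (m+1)
          = ∑ j ∈ D, s' j * (m + j).choose (m+1)) :
    False := by
  obtain ⟨hJ1, hJr⟩ := Finset.mem_Icc.1 (hD hJ)
  set C := (m+J).choose (m+1) with hC
  have h1 : s J * C ≤ ∑ j ∈ D, s j * (m + j).choose (m+1) :=
    Finset.single_le_sum (f := fun j => s j * (m + j).choose (m+1))
      (fun j _ => Nat.zero_le _) hJ
  have h2 : ∑ j ∈ D, s' j * (m + j).choose (m+1)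
      = s' J * C + ∑ j ∈ D.erase J, s' j * (m + j).choose (m+1) :=
    (Finset.add_sum_erase D _ hJ).symm
  have h3 : C ≤ ∑ j ∈ D.erase J, s' j * (m + j).choose (m+1) := by
    rw [hsum, h2] at h1
    have hs1 : (s' J + 1) * C ≤ s J * C := Nat.mul_le_mul_right _ hlt
    have e : (s' J + 1) * C = s' J * C + C := by ring
    rw [e] at hs1
    linarith
  have hsub : D.erase J ⊆ Finset.Icc 1 (J-1) := by
    intro j hj
    have h1' := Finset.mem_Icc.1 (hD (Finset.mem_of_mem_erase hj))
    have h2' := Finset.ne_of_mem_erase hj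
    have h3' := hmax j (Finset.mem_of_mem_erase hj)
    exact Finset.mem_Icc.2 ⟨h1'.1, by omega⟩
  have hhk : ∑ j ∈ Finset.Icc 1 (J-1), (m + j).choose (m+1)
      = (m + J).choose (m+2) := by
    obtain ⟨J', rfl⟩ : ∃ J', J = J' + 1 := ⟨J - 1, by omega⟩
    simp only [Nat.add_sub_cancel]
    rw [hockey m J', show m + J' + 1 = m + (J' + 1) by ring]
  have h4 : r * C ≤ (m+1) * (m + J).choose (m+2) := by
    calc r * C ≤ r * ∑ j ∈ D.erase J, s' j * (m + j).choose (m+1) :=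
          Nat.mul_le_mul_left _ h3
      _ = ∑ j ∈ D.erase J, (r * s' j) * (m + j).choose (m+1) := by
          rw [Finset.mul_sum]; apply Finset.sum_congr rfl; intro j _; ring
      _ ≤ ∑ j ∈ D.erase J, (m+1) * (m + j).choose (m+1) :=
          Finset.sum_le_sum (fun j hj =>
            Nat.mul_le_mul_right _ (hb j (Finset.mem_of_mem_erase hj)))
      _ ≤ ∑ j ∈ Finset.Icc 1 (J-1), (m+1) * (m + j).choose (m+1) :=
          Finset.sum_le_sum_of_subset hsub
      _ = (m+1) * ∑ j ∈ Finset.Icc 1 (J-1), (m + j).choose (m+1) :=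
          (Finset.mul_sum _ _ _).symm
      _ = (m+1) * (m + J).choose (m+2) := by rw [hhk]
  have h5 : (m+J).choose (m+2) * (m+2) = C * (J-1) := by
    have := Nat.choose_succ_right_eq (m+J) (m+1)
    simpa [hC, show m + J - (m+1) = J - 1 by omega] using this
  have hC1 : 1 ≤ C := Nat.choose_pos (by omega)
  have h6 : r * (m+2) * C ≤ (m+1) * (J-1) * C := by
    calc r * (m+2) * C = (r * C) * (m+2) := by ring
      _ ≤ ((m+1) * (m + J).choose (m+2)) * (m+2) := Nat.mul_le_mul_right _ h4
      _ = (m+1) * ((m+J).choose (m+2) * (m+2)) := by ring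
      _ = (m+1) * (C * (J-1)) := by rw [h5]
      _ = (m+1) * (J-1) * C := by ring
  have h7 : r * (m+2) ≤ (m+1) * (J-1) := Nat.le_of_mul_le_mul_right h6 (by omega)
  have h8 : (m+1) * (J-1) < r * (m+2) := by
    calc (m+1) * (J-1) ≤ (m+1) * r := Nat.mul_le_mul_left _ (by omega)
      _ < (m+2) * r := by
          apply Nat.mul_lt_mul_of_lt_of_le (by omega) (le_refl r) (by omega)
      _ = r * (m+2) := by ring
  exact Nat.lt_irrefl _ (Nat.lt_of_le_of_lt h7 h8)

lemma arith (m r : ℕ) (s s' : ℕ → ℕ)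
    (hs : ∀ j ∈ Finset.Icc 1 r, s j = s' j ∨ (r * s j ≤ m + 1 ∧ r * s' j ≤ m + 1))
    (hsum : ∑ j ∈ Finset.Icc 1 r, s j * (m + j).choose (m+1)
          = ∑ j ∈ Finset.Icc 1 r, s' j * (m + j).choose (m+1)) :
    ∀ j ∈ Finset.Icc 1 r, s j = s' j := by
  by_contra h
  push_neg at h
  obtain ⟨j0, hj0, hne0⟩ := h
  set D := (Finset.Icc 1 r).filter (fun j => s j ≠ s' j) with hDdef
  have hDsub : D ⊆ Finset.Icc 1 r := Finset.filter_subset _ _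
  have hDne : D.Nonempty := ⟨j0, Finset.mem_filter.2 ⟨hj0, hne0⟩⟩
  have hsumD : ∑ j ∈ D, s j * (m + j).choose (m+1)
      = ∑ j ∈ D, s' j * (m + j).choose (m+1) := by
    have e1 := Finset.sum_filter_add_sum_filter_not (Finset.Icc 1 r)
      (fun j => s j ≠ s' j) (fun j => s j * (m + j).choose (m+1))
    have e2 := Finset.sum_filter_add_sum_filter_not (Finset.Icc 1 r)
      (fun j => s j ≠ s' j) (fun j => s' j * (m + j).choose (m+1))
    have e3 : ∑ j ∈ (Finset.Icc 1 r).filter (fun j => ¬ s j ≠ s' j),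
        s j * (m + j).choose (m+1)
        = ∑ j ∈ (Finset.Icc 1 r).filter (fun j => ¬ s j ≠ s' j),
        s' j * (m + j).choose (m+1) := by
      apply Finset.sum_congr rfl
      intro j hj
      have := (Finset.mem_filter.1 hj).2
      push_neg at this
      rw [this]
    rw [hDdef]
    omega
  set J := D.max' hDne with hJdef
  have hJD : J ∈ D := D.max'_mem hDne
  have hmax : ∀ j ∈ D, j ≤ J := fun j hj => D.le_max' j hj
  have hbd : ∀ j ∈ D, r * s j ≤ m + 1 ∧ r * s' j ≤ m + 1 := by
    intro j hj
    obtain ⟨hj1, hj2⟩ := Finset.mem_filter.1 hj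
    rcases hs j hj1 with h | h
    · exact absurd h hj2
    · exact h
  rcases Nat.lt_trichotomy (s' J) (s J) with hlt | heq | hlt
  · exact key m r J s s' D hDsub hJD hmax (fun j hj => (hbd j hj).2) hlt hsumD
  · exact (Finset.mem_filter.1 hJD).2 heq.symm
  · exact key m r J s' s D hDsub hJD hmax (fun j hj => (hbd j hj).1) hlt hsumD.symm

end SubwordAux

/-- Let `|v|_1 = |v'|_1 = m`, `1 ≤ r ≤ m+2`, and suppose that for every `j ∈ {1,…,r}`
either `s_j = s'_j` or both `r·s_j ≤ m+1` and `r·s'_j ≤ m+1`. If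
`w = p · 0^{s_r} 1 ⋯ 1 0^{s_1} 1 · v` and `w' = p · 0^{s'_r} 1 ⋯ 1 0^{s'_1} 1 · v'`
have the same number of occurrences of `0·1^{1+m}` as a subword, then
`s_j = s'_j` for every `j ∈ {1,…,r}`. -/
theorem subword_count_determines_unknown_blocks (p v v' : List Bool) (m : ℕ)
    (hv : v.count true = m) (hv' : v'.count true = m)
    (r : ℕ) (hr1 : 1 ≤ r) (hrm : r ≤ m + 2)
    (s s' : ℕ → ℕ)
    (hs : ∀ j ∈ Finset.Icc 1 r, s j = s' j ∨ (r * s j ≤ m + 1 ∧ r * s' j ≤ m + 1))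
    (hcount :
      ((p ++ zeroBlocksOne s r ++ v).sublists).count
          (false :: List.replicate (1 + m) true) =
        ((p ++ zeroBlocksOne s' r ++ v').sublists).count
          (false :: List.replicate (1 + m) true)) :
    ∀ j ∈ Finset.Icc 1 r, s j = s' j := by
  rw [SubwordAux.cnt_total m r p v hv s, SubwordAux.cnt_total m r p v' hv' s'] at hcount
  have hsum : ∑ j ∈ Finset.Icc 1 r, s j * (m + j).choose (m+1)
      = ∑ j ∈ Finset.Icc 1 r, s' j * (m + j).choose (m+1) := by omega
  exact SubwordAux.arith m r s s' hs hsum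
end

section
/- Let u and w be words over an alphabet 𝒜. If for every pair of letters a, b ∈ 𝒜 the projections onto {a,b} agree, i.e., π_{{a,b}}(u) = π_{{a,b}}(w), then u = w. -/
/-- If two words `u` and `w` over an alphabet `α` have the same projection onto every
binary sub-alphabet `{a, b}` (the projection onto a set of letters keeps exactly the
letters of that set), then `u = w`. -/
theorem eq_of_binary_projections_eq {α : Type*} [DecidableEq α] (u w : List α)
    (h : ∀ a b : α,
      u.filter (fun x => decide (x = a ∨ x = b)) =
        w.filter (fun x => decide (x = a ∨ x = b))) :
    u = w := by
  induction u generalizing w with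
  | nil =>
    cases w with
    | nil => rfl
    | cons c w' =>
      have := h c c
      simp at this
  | cons a u' ih =>
    cases w with
    | nil =>
      have := h a a
      simp at this
    | cons b w' =>
      have hab := h a b
      simp only [List.filter_cons] at hab
      simp at hab
      have heq : a = b := hab.1
      subst heq
      have htail : u' = w' := by
        apply ih
        intro c d
        have hcd := h c d
        simp only [List.filter_cons] at hcd
        by_cases hp : decide (a = c ∨ a = d) = true
        · rw [hp] at hcd
          simpa using List.tail_eq_of_cons_eq hcd
        · rw [Bool.not_eq_true] at hp
          rw [hp] at hcd
          simpa using hcd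
      rw [htail]
end

section
/- Let ℬ and 𝒞 be disjoint sets of letters and let w be a nonempty word over ℬ ∪ 𝒞 such that u = π_ℬ(w) is nonempty; let v = π_𝒞(w) and let u₁ be the first letter of u. Then the word u₁·v (the concatenation of the single letter u₁ with v) is a subword of w if and only if the first letter of w equals u₁. -/
namespace List

variable {α : Type*} {q : α → Bool} {x a : α} {t : List α}

theorem cons_filter_cons_sublist_of_not (ha : ¬ q a) : a :: (a :: t).filter q <+ a :: t := by
  rw [filter_cons_of_neg ha]
  exact filter_sublist.cons_cons a

/-- Dropping the head `a ≠ x` would force `a :: t.filter q` to embed into `t.filter q`. -/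
theorem not_cons_filter_cons_sublist (hx : ¬ q x) (ha : q a) :
    ¬ x :: (a :: t).filter q <+ a :: t := by
  intro h
  have hxa : x ≠ a := by rintro rfl; exact hx ha
  rw [filter_cons_of_pos ha] at h
  have h' : x :: a :: t.filter q <+ t := (sublist_cons_iff.mp h).resolve_right
    (by rintro ⟨r, hr, -⟩; exact hxa (cons.inj hr).1)
  have hidem : (t.filter q).filter q = t.filter q :=
    filter_eq_self.2 fun _ hb => (mem_filter.1 hb).2
  have hlen := (h'.filter q).length_le
  simp only [filter_cons_of_neg hx, filter_cons_of_pos ha, hidem, length_cons] at hlen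
  omega

end List

/-- Let `B` and `C` be disjoint sets of letters and `w` a nonempty word over `B ∪ C`
whose projection `u = π_B(w)` is nonempty; let `v = π_C(w)` and let `u₁` be the first
letter of `u`. Then `u₁ · v` is a subword of `w` if and only if the first letter of `w`
is `u₁`. -/
theorem head_proj_cons_sublist_iff {α : Type*} [DecidableEq α] (B C : Finset α)
    (hBC : Disjoint B C) (w : List α) (hw : w ≠ [])
    (hmem : ∀ x ∈ w, x ∈ B ∪ C)
    (hu : w.filter (fun x => decide (x ∈ B)) ≠ []) :
    List.Sublist
        ((w.filter (fun x => decide (x ∈ B))).head hu ::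
          w.filter (fun x => decide (x ∈ C))) w ↔
      w.head hw = (w.filter (fun x => decide (x ∈ B))).head hu := by
  obtain ⟨a, t, rfl⟩ := List.exists_cons_of_ne_nil hw
  set u₁ := ((a :: t).filter (fun x => decide (x ∈ B))).head hu
  have hu₁B : u₁ ∈ B := of_decide_eq_true (List.mem_filter.mp (List.head_mem hu)).2
  have hu₁C : u₁ ∉ C := Finset.disjoint_left.mp hBC hu₁B
  rw [List.head_cons]
  constructor
  · intro hsub
    by_contra hne
    have haB : a ∉ B := fun haB => hne (List.head_filter_of_pos hw (decide_eq_true haB)).symm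
    have haC : a ∈ C := (Finset.mem_union.mp (hmem a List.mem_cons_self)).resolve_left haB
    exact List.not_cons_filter_cons_sublist (by simpa using hu₁C) (by simpa using haC) hsub
  · intro h
    rw [← h]
    exact List.cons_filter_cons_sublist_of_not fun haC => hu₁C (h ▸ of_decide_eq_true haC)
end

section
/- Let ℬ be a set of letters, let a be a letter with a ∉ ℬ, and let t be a nonempty word over ℬ ∪ {a}. Then the word a·π_ℬ(t) (the concatenation of the single letter a with the projection of t onto ℬ) is a subword of t if and only if the first letter of t equals a. -/
/-! If `t = x :: s` with `x ≠ a`, then `x ∈ B`, and since `a ≠ x` the embedding of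
`a · π_B(t) = a · x · π_B(s)` into `t` must skip `x`, so `x · π_B(s)` would be a subword of `s`,
which has one more letter of `B` than `s` itself. -/

namespace List

variable {α : Type*} {p : α → Bool}

theorem not_cons_filter_sublist {x : α} (hx : p x) (s : List α) :
    ¬ x :: s.filter p <+ s := by
  intro h
  have := (h.filter p).length_le
  simp [hx, filter_filter] at this

theorem cons_filter_cons_sublist_iff {a x : α} (ha : ¬ p a) (hx : p x ∨ x = a) (s : List α) :
    a :: (x :: s).filter p <+ x :: s ↔ x = a := by
  constructor
  · intro h
    by_contra hxa
    have hpx : p x := hx.resolve_right hxa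
    rw [filter_cons_of_pos hpx] at h
    exact not_cons_filter_sublist hpx s
      ((sublist_cons_self a _).trans (h.of_cons_of_ne (Ne.symm hxa)))
  · rintro rfl
    rw [filter_cons_of_neg ha]
    exact filter_sublist.cons_cons x

end List

/-- Let `B` be a set of letters, `a ∉ B` a letter, and `t` a nonempty word over
`B ∪ {a}`. Then `a · π_B(t)` is a subword of `t` if and only if the first letter of `t`
is `a`. -/
theorem cons_proj_sublist_iff_head_eq {α : Type*} [DecidableEq α] (B : Finset α)
    (a : α) (ha : a ∉ B) (t : List α) (ht : t ≠ [])
    (hmem : ∀ x ∈ t, x ∈ B ∨ x = a) :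
    List.Sublist (a :: t.filter (fun x => decide (x ∈ B))) t ↔
      t.head ht = a := by
  obtain ⟨x, s, rfl⟩ := List.exists_cons_of_ne_nil ht
  simpa using List.cons_filter_cons_sublist_iff (p := fun y => decide (y ∈ B))
    (by simpa using ha) (by simpa using hmem x List.mem_cons_self) s
end
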